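/- Let p be a prime, a ≥ 3, l ≥ 2, and let G = Sp(2l, ℤ/p^aℤ). Let K be the set of g ∈ G whose entrywise image in ℤ/p^{a-1}ℤ (under ZMod.castHom) is the identity matrix, and L the set of g ∈ G whose entrywise image in ℤ/p^{a-2}ℤ is the identity matrix. Then every element of K commutes with every element of L, and if U is a subgroup of G contained in L such that every element of L can be written as k·u with k ∈ K and u ∈ U, then U ⊇ L. -/

import Mathlib

/-!
Put `c = p^(a-1)` and `d = p^(a-2)` in `R = ℤ/p^aℤ`, so that the two congruence kernels are
`K = {1 + c • X}` and `L = {1 + d • Y}`. Since `c * d = 0` the group `K` centralizes `L`, and since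
`p * c = 0` it has exponent `p`. So if `L = K·U` with `U ≤ L`, writing `g = k * u` gives
`g ^ p = u ^ p ∈ U` for every `g ∈ L`, and it suffices that `K` is generated by `p`-th powers of
elements of `L`. An element of `K` is `1 + c • (T * J)` with `c • T` symmetric; after replacing `T` by
a symmetric matrix with the same `c`-multiple, `T` is a sum of matrices `s • v vᵀ`, and
`1 + c • ((s • v vᵀ) * J)` is the `p`-th power of the symplectic transvection `1 + d • ((s • v vᵀ) * J)`.
-/

open Matrix

theorem ZMod.castHom_eq_zero_iff {m n : ℕ} (h : m ∣ n) (x : ZMod n) :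
    ZMod.castHom h (ZMod m) x = 0 ↔ ∃ y, x = m * y := by
  constructor
  · intro hx
    rw [← ZMod.intCast_zmod_cast x, map_intCast, ZMod.intCast_zmod_eq_zero_iff_dvd] at hx
    obtain ⟨t, ht⟩ := hx
    refine ⟨t, ?_⟩
    rw [← ZMod.intCast_zmod_cast x, ht]
    push_cast
    rfl
  · rintro ⟨y, rfl⟩
    rw [map_mul, map_natCast, ZMod.natCast_self, zero_mul]

theorem Matrix.map_castHom_eq_one_iff {m n : ℕ} (h : m ∣ n) {ι : Type*} [DecidableEq ι]
    (M : Matrix ι ι (ZMod n)) :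
    M.map (ZMod.castHom h (ZMod m)) = 1 ↔ ∃ X, M = 1 + (m : ZMod n) • X := by
  rw [← sub_eq_zero, ← Matrix.map_one (ZMod.castHom h (ZMod m)) (map_zero _) (map_one _),
    ← Matrix.map_sub _ (map_sub _)]
  constructor
  · intro hM
    choose X hX using fun i j => (ZMod.castHom_eq_zero_iff h ((M - 1) i j)).1 (congr_fun₂ hM i j)
    exact ⟨of X, by rw [← sub_eq_iff_eq_add']; ext i j; simp [hX]⟩
  · rintro ⟨X, rfl⟩
    ext i j
    exact (ZMod.castHom_eq_zero_iff h _).2 ⟨X i j, by simp⟩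

theorem Matrix.map_castHom_pow_eq_one_iff {p a b : ℕ} (hb : b ≤ a) {ι : Type*} [DecidableEq ι]
    (M : Matrix ι ι (ZMod (p ^ a))) :
    M.map (ZMod.castHom (pow_dvd_pow p hb) (ZMod (p ^ b))) = 1 ↔
      ∃ X, M = 1 + (p : ZMod (p ^ a)) ^ b • X := by
  rw [map_castHom_eq_one_iff, Nat.cast_pow]

theorem one_add_pow_of_mul_self_eq_zero {A : Type*} [Ring A] {N : A} (hN : N * N = 0) (m : ℕ) :
    (1 + N) ^ m = 1 + m • N := by
  induction m with
  | zero => simp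
  | succ m ih =>
    rw [pow_succ, ih, add_mul, one_mul, mul_add, mul_one, smul_mul_assoc, hN, smul_zero, add_zero,
      succ_nsmul', add_assoc]

section Algebra
variable {R A : Type*} [CommRing R] [Ring A] [Algebra R A] {c d : R}

theorem one_add_smul_mul_one_add_smul (hcd : c * d = 0) (x y : A) :
    (1 + c • x) * (1 + d • y) = 1 + c • x + d • y := by
  rw [mul_add, mul_one, add_mul, one_mul, smul_mul_smul_comm, hcd, zero_smul, add_zero, add_assoc]

theorem commute_one_add_smul_one_add_smul (hcd : c * d = 0) (x y : A) :
    Commute (1 + c • x) (1 + d • y) := by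
  rw [Commute, SemiconjBy, one_add_smul_mul_one_add_smul hcd,
    one_add_smul_mul_one_add_smul (by rwa [mul_comm]), add_right_comm]

theorem one_add_smul_pow_eq_one {p : ℕ} (hpc : (p : R) * c = 0) (hcc : c * c = 0) (x : A) :
    (1 + c • x) ^ p = 1 := by
  rw [one_add_pow_of_mul_self_eq_zero (by rw [smul_mul_smul_comm, hcc, zero_smul]),
    ← Nat.cast_smul_eq_nsmul R, smul_smul, hpc, zero_smul, add_zero]

end Algebra

namespace Matrix

variable {R n : Type*} [CommRing R] [DecidableEq n]

variable (R n) in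
def symmRankOne : Set (Matrix n n R) :=
  Set.range fun sv : R × (n → R) => sv.1 • vecMulVec sv.2 sv.2

theorem single_same_mem_symmRankOne (i : n) (r : R) : single i i r ∈ symmRankOne R n :=
  ⟨(r, Pi.single i 1), by simp [← single_eq_single_vecMulVec_single]⟩

theorem single_add_single_mem_closure_symmRankOne (i j : n) (r : R) :
    single i j r + single j i r ∈ AddSubmonoid.closure (symmRankOne R n) := by
  have h : single i j r + single j i r =
      r • vecMulVec (Pi.single i 1 + Pi.single j 1) (Pi.single i 1 + Pi.single j 1) +
        single i i (-r) + single j j (-r) := by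
    simp only [add_vecMulVec, vecMulVec_add, ← single_eq_single_vecMulVec_single, smul_add,
      smul_single, smul_eq_mul, mul_one]
    rw [← single_neg, ← single_neg]
    abel
  rw [h]
  exact add_mem (add_mem (AddSubmonoid.subset_closure ⟨(r, _), rfl⟩)
    (AddSubmonoid.subset_closure (single_same_mem_symmRankOne i _)))
    (AddSubmonoid.subset_closure (single_same_mem_symmRankOne j _))

variable [Fintype n]

theorem add_transpose_mem_closure_symmRankOne (X : Matrix n n R) :
    X + Xᵀ ∈ AddSubmonoid.closure (symmRankOne R n) := by
  induction X using Matrix.induction_on' with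
  | h_zero => simp
  | h_add X Y hX hY =>
    rw [transpose_add, add_add_add_comm]
    exact add_mem hX hY
  | h_std_basis i j r =>
    rw [transpose_single]
    exact single_add_single_mem_closure_symmRankOne i j r

theorem diagonal_mem_closure_symmRankOne (d : n → R) :
    diagonal d ∈ AddSubmonoid.closure (symmRankOne R n) := by
  rw [← sum_single_eq_diagonal]
  exact sum_mem fun i _ => AddSubmonoid.subset_closure (single_same_mem_symmRankOne i (d i))

theorem exists_mem_closure_symmRankOne_smul_eq {c : R} {S : Matrix n n R}
    (hS : (c • S)ᵀ = c • S) : ∃ T ∈ AddSubmonoid.closure (symmRankOne R n), c • T = c • S := by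
  let e := Fintype.equivFin n
  -- `S` itself need not be symmetric: keep its part above the diagonal for the order `e`
  let U : Matrix n n R := of fun i j => if e i < e j then S i j else 0
  refine ⟨U + Uᵀ + diagonal S.diag, add_mem (add_transpose_mem_closure_symmRankOne U)
    (diagonal_mem_closure_symmRankOne _), ?_⟩
  ext i j
  have hji : c * S j i = c * S i j := congr_fun₂ hS i j
  rcases lt_trichotomy (e i) (e j) with h | h | h
  · simp [U, h, lt_asymm h, ne_of_apply_ne e h.ne]
  · obtain rfl := e.injective h
    simp [U]
  · simp [U, h, lt_asymm h, ne_of_apply_ne e h.ne', hji]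

end Matrix

namespace SymplecticGroup

variable {l R : Type*} [DecidableEq l] [Fintype l] [CommRing R]

theorem dotProduct_J_mulVec_self (v : l ⊕ l → R) : v ⬝ᵥ J l R *ᵥ v = 0 := by
  rw [← Sum.elim_comp_inl_inr v, J, fromBlocks_mulVec, sumElim_dotProduct_sumElim]
  simp [neg_mulVec, dotProduct_comm (v ∘ Sum.inl)]

theorem vecMulVec_self_mul_J_mul_vecMulVec_self (v : l ⊕ l → R) :
    vecMulVec v v * J l R * vecMulVec v v = 0 := by
  rw [vecMulVec_mul, vecMulVec_mul_vecMulVec, ← dotProduct_mulVec, dotProduct_J_mulVec_self,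
    zero_smul, vecMulVec_zero]

-- `(1 + T * J) * J * (1 + T * J)ᵀ = J + T * J * T` for symmetric `T`
theorem one_add_mul_J_mem {T : Matrix (l ⊕ l) (l ⊕ l) R} (hT : Tᵀ = T)
    (hTJT : T * J l R * T = 0) : 1 + T * J l R ∈ symplecticGroup l R := by
  rw [mem_iff, transpose_add, transpose_one, transpose_mul, J_transpose, hT]
  simp only [add_mul, mul_add, one_mul, mul_one, neg_mul, mul_neg, Matrix.mul_assoc, J_squared]
  simp only [← Matrix.mul_assoc, hTJT]
  simp [J_squared]

def transvection (t : R) (v : l ⊕ l → R) : symplecticGroup l R :=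
  ⟨1 + (t • vecMulVec v v) * J l R, one_add_mul_J_mem (by simp) (by
    rw [smul_mul_assoc, smul_mul_assoc, mul_smul_comm, vecMulVec_self_mul_J_mul_vecMulVec_self,
      smul_zero, smul_zero])⟩

theorem coe_transvection (t : R) (v : l ⊕ l → R) :
    (transvection t v : Matrix (l ⊕ l) (l ⊕ l) R) = 1 + (t • vecMulVec v v) * J l R :=
  rfl

theorem coe_transvection_pow (t : R) (v : l ⊕ l → R) (m : ℕ) :
    ((transvection t v ^ m : symplecticGroup l R) : Matrix (l ⊕ l) (l ⊕ l) R) =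
      1 + ((m * t) • vecMulVec v v) * J l R := by
  have hsq : (t • vecMulVec v v) * J l R * ((t • vecMulVec v v) * J l R) = 0 := by
    rw [← Matrix.mul_assoc, smul_mul_assoc, smul_mul_assoc, smul_mul_assoc,
      mul_smul_comm, vecMulVec_self_mul_J_mul_vecMulVec_self]
    simp
  rw [SubmonoidClass.coe_pow, coe_transvection, one_add_pow_of_mul_self_eq_zero hsq, mul_smul,
    Nat.cast_smul_eq_nsmul, smul_mul_assoc, smul_mul_assoc, smul_mul_assoc]

theorem exists_smul_mul_J_of_one_add_smul_mem {c : R} (hcc : c * c = 0)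
    {X : Matrix (l ⊕ l) (l ⊕ l) R} (hX : 1 + c • X ∈ symplecticGroup l R) :
    ∃ S, (c • S)ᵀ = c • S ∧ c • X = (c • S) * J l R := by
  refine ⟨-(X * J l R), ?_, ?_⟩
  · have hsum : c • (X * J l R) + c • (J l R * Xᵀ) = 0 := by
      rw [← sub_eq_zero.2 (mem_iff.1 hX)]
      simp only [transpose_add, transpose_one, transpose_smul, add_mul, mul_add, one_mul, mul_one,
        smul_add, smul_mul_assoc, mul_smul_comm, smul_smul, hcc, zero_smul, add_zero]
      abel
    simp only [transpose_smul, transpose_neg, transpose_mul, J_transpose, Matrix.neg_mul, neg_neg,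
      smul_neg]
    rw [eq_neg_iff_add_eq_zero, add_comm, hsum]
  · rw [smul_mul_assoc, Matrix.neg_mul, Matrix.mul_assoc, J_squared]
    simp

variable {p : ℕ} {c d : R}

theorem commute_of_coe_eq_one_add_smul (hcd : c * d = 0) {g h : symplecticGroup l R}
    {X Y : Matrix (l ⊕ l) (l ⊕ l) R} (hg : (g : Matrix (l ⊕ l) (l ⊕ l) R) = 1 + c • X)
    (hh : (h : Matrix (l ⊕ l) (l ⊕ l) R) = 1 + d • Y) : Commute g h :=
  Subtype.ext (by
    simpa only [MulMemClass.coe_mul, hg, hh] using (commute_one_add_smul_one_add_smul hcd X Y).eq)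

theorem pow_eq_one_of_coe_eq_one_add_smul (hpc : (p : R) * c = 0) (hcc : c * c = 0)
    {g : symplecticGroup l R} {X : Matrix (l ⊕ l) (l ⊕ l) R}
    (hg : (g : Matrix (l ⊕ l) (l ⊕ l) R) = 1 + c • X) : g ^ p = 1 :=
  Subtype.ext (by rw [SubmonoidClass.coe_pow, hg, one_add_smul_pow_eq_one hpc hcc]; rfl)

variable {L : Set (symplecticGroup l R)}

theorem exists_mem_closure_pow_coe_eq_one_add_smul (hc : c = p * d) (hcc : c * c = 0)
    (hL : ∀ (h : symplecticGroup l R) Y, (h : Matrix (l ⊕ l) (l ⊕ l) R) = 1 + d • Y → h ∈ L)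
    {T : Matrix (l ⊕ l) (l ⊕ l) R} (hT : T ∈ AddSubmonoid.closure (symmRankOne R (l ⊕ l))) :
    ∃ g : symplecticGroup l R, g ∈ Subgroup.closure ((· ^ p) '' L) ∧
      (g : Matrix (l ⊕ l) (l ⊕ l) R) = 1 + c • (T * J l R) := by
  induction hT using AddSubmonoid.closure_induction with
  | mem _ hT =>
    obtain ⟨⟨s, v⟩, rfl⟩ := hT
    refine ⟨transvection (d * s) v ^ p,
      Subgroup.subset_closure ⟨_, hL _ ((s • vecMulVec v v) * J l R) ?_, rfl⟩, ?_⟩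
    · rw [coe_transvection, mul_smul, smul_mul_assoc]
    · rw [coe_transvection_pow, hc, ← mul_assoc, mul_smul, smul_mul_assoc, smul_mul_assoc]
  | zero => exact ⟨1, one_mem _, by simp⟩
  | add T₁ T₂ _ _ ih₁ ih₂ =>
    obtain ⟨g₁, hg₁, e₁⟩ := ih₁
    obtain ⟨g₂, hg₂, e₂⟩ := ih₂
    refine ⟨g₁ * g₂, mul_mem hg₁ hg₂, ?_⟩
    rw [MulMemClass.coe_mul, e₁, e₂, one_add_smul_mul_one_add_smul hcc, add_mul, smul_add,
      add_assoc]

theorem mem_closure_pow_of_coe_eq_one_add_smul (hc : c = p * d) (hcc : c * c = 0)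
    {g : symplecticGroup l R} {X : Matrix (l ⊕ l) (l ⊕ l) R}
    (hL : ∀ (h : symplecticGroup l R) Y, (h : Matrix (l ⊕ l) (l ⊕ l) R) = 1 + d • Y → h ∈ L)
    (hg : (g : Matrix (l ⊕ l) (l ⊕ l) R) = 1 + c • X) :
    g ∈ Subgroup.closure ((· ^ p) '' L) := by
  obtain ⟨S, hS, hXS⟩ := exists_smul_mul_J_of_one_add_smul_mem hcc (hg ▸ g.2)
  obtain ⟨T, hT, hTS⟩ := exists_mem_closure_symmRankOne_smul_eq hS
  obtain ⟨h, hh, hhT⟩ := exists_mem_closure_pow_coe_eq_one_add_smul hc hcc hL hT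
  rwa [show g = h from Subtype.ext (by rw [hhT, hg, hXS, ← hTS, smul_mul_assoc])]

end SymplecticGroup

theorem Subgroup.subset_of_exists_mul_of_subset_closure_pow {G : Type*} [Group G] {n : ℕ}
    {K L : Set G} {U : Subgroup G} (hcomm : ∀ k ∈ K, ∀ u ∈ U, Commute k u)
    (hpow : ∀ k ∈ K, k ^ n = 1) (hgen : K ⊆ closure ((· ^ n) '' L))
    (hLKU : ∀ g ∈ L, ∃ k ∈ K, ∃ u ∈ U, g = k * u) : L ⊆ U := by
  have hpowL : closure ((· ^ n) '' L) ≤ U := by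
    rw [closure_le]
    rintro _ ⟨g, hg, rfl⟩
    obtain ⟨k, hk, u, hu, rfl⟩ := hLKU g hg
    simpa [(hcomm k hk u hu).mul_pow, hpow k hk] using pow_mem hu n
  intro g hg
  obtain ⟨k, hk, u, hu, rfl⟩ := hLKU g hg
  exact mul_mem (hpowL (hgen hk)) hu

theorem stmt5_general (p : ℕ) (a : ℕ) (ha : 3 ≤ a) (l : ℕ) :
    (∀ g h : Matrix.symplecticGroup (Fin l) (ZMod (p ^ a)),
      ((g : Matrix (Fin l ⊕ Fin l) (Fin l ⊕ Fin l) (ZMod (p ^ a))).map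
          (ZMod.castHom (pow_dvd_pow p (Nat.sub_le a 1)) (ZMod (p ^ (a - 1)))) = 1) →
      ((h : Matrix (Fin l ⊕ Fin l) (Fin l ⊕ Fin l) (ZMod (p ^ a))).map
          (ZMod.castHom (pow_dvd_pow p (Nat.sub_le a 2)) (ZMod (p ^ (a - 2)))) = 1) →
      g * h = h * g) ∧
    (∀ U : Subgroup (Matrix.symplecticGroup (Fin l) (ZMod (p ^ a))),
      (∀ u ∈ U, ((u : Matrix (Fin l ⊕ Fin l) (Fin l ⊕ Fin l) (ZMod (p ^ a))).map
          (ZMod.castHom (pow_dvd_pow p (Nat.sub_le a 2)) (ZMod (p ^ (a - 2)))) = 1)) →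
      (∀ g : Matrix.symplecticGroup (Fin l) (ZMod (p ^ a)),
        ((g : Matrix (Fin l ⊕ Fin l) (Fin l ⊕ Fin l) (ZMod (p ^ a))).map
            (ZMod.castHom (pow_dvd_pow p (Nat.sub_le a 2)) (ZMod (p ^ (a - 2)))) = 1) →
        ∃ k : Matrix.symplecticGroup (Fin l) (ZMod (p ^ a)),
          ((k : Matrix (Fin l ⊕ Fin l) (Fin l ⊕ Fin l) (ZMod (p ^ a))).map
              (ZMod.castHom (pow_dvd_pow p (Nat.sub_le a 1)) (ZMod (p ^ (a - 1)))) = 1) ∧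
          ∃ u ∈ U, g = k * u) →
      ∀ g : Matrix.symplecticGroup (Fin l) (ZMod (p ^ a)),
        ((g : Matrix (Fin l ⊕ Fin l) (Fin l ⊕ Fin l) (ZMod (p ^ a))).map
            (ZMod.castHom (pow_dvd_pow p (Nat.sub_le a 2)) (ZMod (p ^ (a - 2)))) = 1) →
        g ∈ U) := by
  have hcd : (p : ZMod (p ^ a)) ^ (a - 1) * (p : ZMod (p ^ a)) ^ (a - 2) = 0 := by
    rw [← pow_add]; exact ZMod.natCast_pow_eq_zero_of_le p (by omega)
  have hcc : (p : ZMod (p ^ a)) ^ (a - 1) * (p : ZMod (p ^ a)) ^ (a - 1) = 0 := by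
    rw [← pow_add]; exact ZMod.natCast_pow_eq_zero_of_le p (by omega)
  have hpc : (p : ZMod (p ^ a)) * (p : ZMod (p ^ a)) ^ (a - 1) = 0 := by
    rw [← pow_succ']; exact ZMod.natCast_pow_eq_zero_of_le p (by omega)
  have hc : (p : ZMod (p ^ a)) ^ (a - 1) = p * (p : ZMod (p ^ a)) ^ (a - 2) := by
    rw [← pow_succ']; congr 1; omega
  have hcomm (g h : symplecticGroup (Fin l) (ZMod (p ^ a)))
      (hg : g.1.map (ZMod.castHom (pow_dvd_pow p (Nat.sub_le a 1)) (ZMod (p ^ (a - 1)))) = 1)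
      (hh : h.1.map (ZMod.castHom (pow_dvd_pow p (Nat.sub_le a 2)) (ZMod (p ^ (a - 2)))) = 1) :
      Commute g h := by
    obtain ⟨X, hX⟩ := (map_castHom_pow_eq_one_iff (Nat.sub_le a 1) _).1 hg
    obtain ⟨Y, hY⟩ := (map_castHom_pow_eq_one_iff (Nat.sub_le a 2) _).1 hh
    exact SymplecticGroup.commute_of_coe_eq_one_add_smul hcd hX hY
  refine ⟨fun g h hg hh => (hcomm g h hg hh).eq, fun U hUL hLKU g hg => ?_⟩
  refine Subgroup.subset_of_exists_mul_of_subset_closure_pow (n := p)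
    (fun k hk u hu => hcomm k u hk (hUL u hu)) (fun k hk => ?_) (fun k hk => ?_) hLKU hg
  all_goals obtain ⟨X, hX⟩ := (map_castHom_pow_eq_one_iff (Nat.sub_le a 1) _).1 hk
  · exact SymplecticGroup.pow_eq_one_of_coe_eq_one_add_smul hpc hcc hX
  · exact SymplecticGroup.mem_closure_pow_of_coe_eq_one_add_smul hc hcc
      (fun h Y hY => (map_castHom_pow_eq_one_iff (Nat.sub_le a 2) _).2 ⟨Y, hY⟩) hX

/-- For `a ≥ 3` and `l ≥ 2`, in `G = Sp(2l, ℤ/p^aℤ)`, the congruence kernel `K`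
(of reduction mod `p^{a-1}`) centralizes the congruence kernel `L` (of reduction mod
`p^{a-2}`), and any subgroup `U ≤ L` with `L = K·U` satisfies `U ⊇ L`. -/
theorem stmt5 (p : ℕ) (hp : p.Prime) (a : ℕ) (ha : 3 ≤ a) (l : ℕ) (hl : 2 ≤ l) :
    (∀ g h : Matrix.symplecticGroup (Fin l) (ZMod (p ^ a)),
      ((g : Matrix (Fin l ⊕ Fin l) (Fin l ⊕ Fin l) (ZMod (p ^ a))).map
          (ZMod.castHom (pow_dvd_pow p (Nat.sub_le a 1)) (ZMod (p ^ (a - 1)))) = 1) →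
      ((h : Matrix (Fin l ⊕ Fin l) (Fin l ⊕ Fin l) (ZMod (p ^ a))).map
          (ZMod.castHom (pow_dvd_pow p (Nat.sub_le a 2)) (ZMod (p ^ (a - 2)))) = 1) →
      g * h = h * g) ∧
    (∀ U : Subgroup (Matrix.symplecticGroup (Fin l) (ZMod (p ^ a))),
      (∀ u ∈ U, ((u : Matrix (Fin l ⊕ Fin l) (Fin l ⊕ Fin l) (ZMod (p ^ a))).map
          (ZMod.castHom (pow_dvd_pow p (Nat.sub_le a 2)) (ZMod (p ^ (a - 2)))) = 1)) →
      (∀ g : Matrix.symplecticGroup (Fin l) (ZMod (p ^ a)),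
        ((g : Matrix (Fin l ⊕ Fin l) (Fin l ⊕ Fin l) (ZMod (p ^ a))).map
            (ZMod.castHom (pow_dvd_pow p (Nat.sub_le a 2)) (ZMod (p ^ (a - 2)))) = 1) →
        ∃ k : Matrix.symplecticGroup (Fin l) (ZMod (p ^ a)),
          ((k : Matrix (Fin l ⊕ Fin l) (Fin l ⊕ Fin l) (ZMod (p ^ a))).map
              (ZMod.castHom (pow_dvd_pow p (Nat.sub_le a 1)) (ZMod (p ^ (a - 1)))) = 1) ∧
          ∃ u ∈ U, g = k * u) →
      ∀ g : Matrix.symplecticGroup (Fin l) (ZMod (p ^ a)),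
        ((g : Matrix (Fin l ⊕ Fin l) (Fin l ⊕ Fin l) (ZMod (p ^ a))).map
            (ZMod.castHom (pow_dvd_pow p (Nat.sub_le a 2)) (ZMod (p ^ (a - 2)))) = 1) →
        g ∈ U) :=
  stmt5_general p a ha l
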